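/- For the symmetric two-component mixture f(x) = ½φ(x−θ₁) + ½φ(x−θ₂) with θ₁ = t − a and θ₂ = t + a (a > 0), the limiting Viterbi-training mean for the first component, μ₁(a) = ∫_{−∞}^{t} x f(x) dx / ∫_{−∞}^{t} f(x) dx, equals t − a(1 − 2Φ(−a)) − 2φ(−a), i.e. μ₁(a) = −a(1−2Φ(−a)) − 2φ(a) + t. By symmetry, μ₂(a) = 2t − μ₁(a). -/

import Mathlib

open Real Set MeasureTheory

/-- standard normal density -/
noncomputable def stdPhi (x : ℝ) : ℝ := (Real.sqrt (2 * Real.pi))⁻¹ * Real.exp (-x ^ 2 / 2)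

/-- standard normal CDF -/
noncomputable def stdCDF (t : ℝ) : ℝ := ∫ x in Set.Iic t, stdPhi x

/-! On `(-∞, c]`, a translated standard normal has mass `Φ(c - m)` and first moment
`m Φ(c - m) - φ(c - m)`, the latter because `φ' = -x φ`. With the boundary at the midpoint `t`
the two components contribute masses `Φ(a)/2` and `Φ(-a)/2`, summing to `1/2` since
`Φ(a) + Φ(-a) = 1`. The mixture has total mass `1` and mean `t`, so `[t, ∞)` carries mass `1/2`
and first moment `t` minus that of `(-∞, t]`, which gives `μ₂ = 2t - μ₁`. -/

open Filter Topology

lemma stdPhi_neg (x : ℝ) : stdPhi (-x) = stdPhi x := by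
  simp only [stdPhi, neg_sq]

lemma stdPhi_eq_mul_exp (x : ℝ) : stdPhi x = (√(2 * π))⁻¹ * rexp (-2⁻¹ * x ^ 2) := by
  rw [stdPhi]; ring_nf

lemma integrable_stdPhi : Integrable stdPhi := by
  simpa only [← stdPhi_eq_mul_exp] using
    (integrable_exp_neg_mul_sq (by norm_num : (0 : ℝ) < 2⁻¹)).const_mul (√(2 * π))⁻¹

lemma integrable_mul_stdPhi : Integrable fun x ↦ x * stdPhi x := by
  simpa only [stdPhi_eq_mul_exp, mul_left_comm] using
    (integrable_mul_exp_neg_mul_sq (by norm_num : (0 : ℝ) < 2⁻¹)).const_mul (√(2 * π))⁻¹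

lemma integral_stdPhi : ∫ x, stdPhi x = 1 := by
  simp_rw [stdPhi_eq_mul_exp]
  rw [integral_const_mul, integral_gaussian, div_inv_eq_mul, mul_comm π]
  exact inv_mul_cancel₀ (by positivity)

lemma integral_mul_stdPhi : ∫ x, x * stdPhi x = 0 := by
  have hodd := integral_neg_eq_self (fun x ↦ x * stdPhi x) volume
  simp only [stdPhi_neg, neg_mul, integral_neg] at hodd
  linarith

lemma hasDerivAt_stdPhi (x : ℝ) : HasDerivAt stdPhi (-x * stdPhi x) x := by
  have h := (((hasDerivAt_pow 2 x).neg.div_const 2).exp).const_mul (√(2 * π))⁻¹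
  exact h.congr_deriv (by simp only [stdPhi, Pi.neg_apply]; ring)

lemma tendsto_stdPhi_atBot : Tendsto stdPhi atBot (𝓝 0) := by
  have hsq : Tendsto (fun x : ℝ ↦ x ^ 2 / 2) atBot atTop := by
    simpa only [sq, id] using (tendsto_id.atBot_mul_atBot₀ tendsto_id).atTop_div_const two_pos
  have h := (tendsto_exp_atBot.comp (tendsto_neg_atTop_atBot.comp hsq)).const_mul (√(2 * π))⁻¹
  rw [mul_zero] at h
  exact h.congr fun x ↦ by simp only [stdPhi, Function.comp, neg_div]

lemma integral_Iic_mul_stdPhi (c : ℝ) : ∫ x in Iic c, x * stdPhi x = -stdPhi c := by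
  simpa using integral_Iic_of_hasDerivAt_of_tendsto'
    (fun x _ ↦ (hasDerivAt_stdPhi x).neg.congr_deriv (by ring)) integrable_mul_stdPhi.integrableOn
    tendsto_stdPhi_atBot.neg

lemma stdCDF_add_stdCDF_neg (c : ℝ) : stdCDF c + stdCDF (-c) = 1 := by
  have hneg : stdCDF (-c) = ∫ x in Ioi c, stdPhi x := by
    simp only [stdCDF, ← integral_comp_neg_Ioi, stdPhi_neg]
  rw [hneg, stdCDF, intervalIntegral.integral_Iic_add_Ioi integrable_stdPhi.integrableOn
    integrable_stdPhi.integrableOn, integral_stdPhi]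

lemma setIntegral_Iic_comp_sub {E : Type*} [NormedAddCommGroup E] [NormedSpace ℝ E]
    (g : ℝ → E) (T m : ℝ) : ∫ x in Iic T, g (x - m) = ∫ x in Iic (T - m), g x := by
  have h := (measurePreserving_sub_right volume m).setIntegral_preimage_emb
    (measurableEmbedding_subRight m) g (Iic (T - m))
  rwa [preimage_sub_const_Iic, sub_add_cancel] at h

lemma mul_stdPhi_sub (m x : ℝ) :
    x * stdPhi (x - m) = (x - m) * stdPhi (x - m) + m * stdPhi (x - m) := by
  ring

lemma integrable_stdPhi_sub (m : ℝ) : Integrable fun x ↦ stdPhi (x - m) :=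
  integrable_stdPhi.comp_sub_right m

lemma integrable_mul_stdPhi_sub (m : ℝ) : Integrable fun x ↦ x * stdPhi (x - m) := by
  simpa only [mul_stdPhi_sub m, Pi.add_def] using
    (integrable_mul_stdPhi.comp_sub_right m).add ((integrable_stdPhi_sub m).const_mul m)

lemma integral_stdPhi_sub (m : ℝ) : ∫ x, stdPhi (x - m) = 1 := by
  rw [integral_sub_right_eq_self stdPhi m, integral_stdPhi]

lemma integral_mul_stdPhi_sub (m : ℝ) : ∫ x, x * stdPhi (x - m) = m := by
  simp_rw [mul_stdPhi_sub m]
  rw [integral_add (integrable_mul_stdPhi.comp_sub_right m) ((integrable_stdPhi_sub m).const_mul m),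
    integral_sub_right_eq_self (fun x ↦ x * stdPhi x) m, integral_mul_stdPhi, integral_const_mul,
    integral_stdPhi_sub, zero_add, mul_one]

lemma integral_Iic_stdPhi_sub (T m : ℝ) : ∫ x in Iic T, stdPhi (x - m) = stdCDF (T - m) :=
  setIntegral_Iic_comp_sub stdPhi T m

lemma integral_Iic_mul_stdPhi_sub (T m : ℝ) :
    ∫ x in Iic T, x * stdPhi (x - m) = m * stdCDF (T - m) - stdPhi (T - m) := by
  simp_rw [mul_stdPhi_sub m]
  rw [integral_add (integrable_mul_stdPhi.comp_sub_right m).integrableOn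
      ((integrable_stdPhi_sub m).const_mul m).integrableOn,
    setIntegral_Iic_comp_sub (fun x ↦ x * stdPhi x), integral_Iic_mul_stdPhi, integral_const_mul,
    integral_Iic_stdPhi_sub]
  ring

lemma setIntegral_Ici_eq_integral_sub {g : ℝ → ℝ} (hg : Integrable g) (t : ℝ) :
    ∫ x in Ici t, g x = (∫ x, g x) - ∫ x in Iic t, g x := by
  rw [integral_Ici_eq_integral_Ioi, ← compl_Iic, setIntegral_compl measurableSet_Iic hg]

lemma integral_half_add_half {α : Type*} [MeasurableSpace α] {μ : Measure α} {g h : α → ℝ}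
    (hg : Integrable g μ) (hh : Integrable h μ) :
    ∫ x, (1 / 2 * g x + 1 / 2 * h x) ∂μ = 1 / 2 * (∫ x, g x ∂μ) + 1 / 2 * ∫ x, h x ∂μ := by
  rw [integral_add (hg.const_mul _) (hh.const_mul _), integral_const_mul, integral_const_mul]

noncomputable def normalMixture (m₁ m₂ x : ℝ) : ℝ :=
  1 / 2 * stdPhi (x - m₁) + 1 / 2 * stdPhi (x - m₂)

section normalMixture

variable (m₁ m₂ : ℝ)

lemma mul_normalMixture (x : ℝ) :
    x * normalMixture m₁ m₂ x = 1 / 2 * (x * stdPhi (x - m₁)) + 1 / 2 * (x * stdPhi (x - m₂)) := by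
  rw [normalMixture]; ring

lemma integrable_normalMixture : Integrable (normalMixture m₁ m₂) :=
  ((integrable_stdPhi_sub m₁).const_mul _).add ((integrable_stdPhi_sub m₂).const_mul _)

lemma integrable_mul_normalMixture : Integrable fun x ↦ x * normalMixture m₁ m₂ x := by
  simpa only [mul_normalMixture, Pi.add_def] using
    ((integrable_mul_stdPhi_sub m₁).const_mul _).add ((integrable_mul_stdPhi_sub m₂).const_mul _)

lemma integral_normalMixture : ∫ x, normalMixture m₁ m₂ x = 1 := by
  unfold normalMixture
  rw [integral_half_add_half (integrable_stdPhi_sub m₁) (integrable_stdPhi_sub m₂),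
    integral_stdPhi_sub, integral_stdPhi_sub]
  norm_num

lemma integral_mul_normalMixture : ∫ x, x * normalMixture m₁ m₂ x = (m₁ + m₂) / 2 := by
  simp_rw [mul_normalMixture]
  rw [integral_half_add_half (integrable_mul_stdPhi_sub m₁) (integrable_mul_stdPhi_sub m₂),
    integral_mul_stdPhi_sub, integral_mul_stdPhi_sub]
  ring

lemma integral_Iic_normalMixture (T : ℝ) :
    ∫ x in Iic T, normalMixture m₁ m₂ x = (stdCDF (T - m₁) + stdCDF (T - m₂)) / 2 := by
  unfold normalMixture
  rw [integral_half_add_half (integrable_stdPhi_sub m₁).integrableOn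
    (integrable_stdPhi_sub m₂).integrableOn, integral_Iic_stdPhi_sub, integral_Iic_stdPhi_sub]
  ring

lemma integral_Iic_mul_normalMixture (T : ℝ) :
    ∫ x in Iic T, x * normalMixture m₁ m₂ x =
      (m₁ * stdCDF (T - m₁) - stdPhi (T - m₁) + m₂ * stdCDF (T - m₂) - stdPhi (T - m₂)) / 2 := by
  simp_rw [mul_normalMixture]
  rw [integral_half_add_half (integrable_mul_stdPhi_sub m₁).integrableOn
    (integrable_mul_stdPhi_sub m₂).integrableOn, integral_Iic_mul_stdPhi_sub,
    integral_Iic_mul_stdPhi_sub]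
  ring

end normalMixture

theorem stmt11_general (t a : ℝ)
    (f : ℝ → ℝ)
    (hf : ∀ x, f x = (1 / 2) * stdPhi (x - (t - a)) + (1 / 2) * stdPhi (x - (t + a))) :
    (∫ x in Set.Iic t, x * f x) / (∫ x in Set.Iic t, f x) =
      t - a * (1 - 2 * stdCDF (-a)) - 2 * stdPhi (-a) ∧
    (∫ x in Set.Iic t, x * f x) / (∫ x in Set.Iic t, f x) =
      -a * (1 - 2 * stdCDF (-a)) - 2 * stdPhi a + t ∧
    (∫ x in Set.Ici t, x * f x) / (∫ x in Set.Ici t, f x) =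
      2 * t - ((∫ x in Set.Iic t, x * f x) / (∫ x in Set.Iic t, f x)) := by
  obtain rfl : f = normalMixture (t - a) (t + a) := funext hf
  have hΦ := stdCDF_add_stdCDF_neg a
  have hmass : ∫ x in Iic t, normalMixture (t - a) (t + a) x = 1 / 2 := by
    rw [integral_Iic_normalMixture, sub_sub_cancel, sub_add_cancel_left, hΦ]
  have hmoment : ∫ x in Iic t, x * normalMixture (t - a) (t + a) x =
      (t - a * (1 - 2 * stdCDF (-a)) - 2 * stdPhi a) / 2 := by
    rw [integral_Iic_mul_normalMixture, sub_sub_cancel, sub_add_cancel_left, stdPhi_neg]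
    linear_combination (t - a) / 2 * hΦ
  have hmassIci : ∫ x in Ici t, normalMixture (t - a) (t + a) x = 1 / 2 := by
    rw [setIntegral_Ici_eq_integral_sub (integrable_normalMixture _ _), integral_normalMixture,
      hmass]
    norm_num
  have hmomentIci : ∫ x in Ici t, x * normalMixture (t - a) (t + a) x =
      t - ∫ x in Iic t, x * normalMixture (t - a) (t + a) x := by
    rw [setIntegral_Ici_eq_integral_sub (integrable_mul_normalMixture _ _),
      integral_mul_normalMixture]
    ring_nf
  rw [hmomentIci, hmassIci, hmoment, hmass, stdPhi_neg]
  exact ⟨by ring, by ring, by ring⟩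

theorem stmt11 (t a : ℝ) (ha : 0 < a)
    (f : ℝ → ℝ)
    (hf : ∀ x, f x = (1 / 2) * stdPhi (x - (t - a)) + (1 / 2) * stdPhi (x - (t + a))) :
    (∫ x in Set.Iic t, x * f x) / (∫ x in Set.Iic t, f x) =
      t - a * (1 - 2 * stdCDF (-a)) - 2 * stdPhi (-a) ∧
    (∫ x in Set.Iic t, x * f x) / (∫ x in Set.Iic t, f x) =
      -a * (1 - 2 * stdCDF (-a)) - 2 * stdPhi a + t ∧
    (∫ x in Set.Ici t, x * f x) / (∫ x in Set.Ici t, f x) =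
      2 * t - ((∫ x in Set.Iic t, x * f x) / (∫ x in Set.Iic t, f x)) :=
  stmt11_general t a f hf
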